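/- arXiv:1207.1931 — 3 statements merged into one kernel-verified Lean document; each statement's English description precedes it below -/
import Mathlib

section
/- For any real r and nonzero μ, α(r, μ) · r ≤ |r| < s(r, μ), where α(r, μ) = (exp(2r/μ²) − 1)/(exp(2r/μ²) + 1) and s(r, μ) = μ² · ln(exp(r/μ²) + exp(-r/μ²)). In particular s(r, μ) − α(r, μ) · r > 0. -/
theorem alpha_r_le_abs_lt_s (r μ : ℝ) (hμ : μ ≠ 0) :
    (Real.exp (2 * r / μ^2) - 1) / (Real.exp (2 * r / μ^2) + 1) * r ≤ |r| ∧
    |r| < μ^2 * Real.log (Real.exp (r / μ^2) + Real.exp (-r / μ^2)) ∧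
    0 < μ^2 * Real.log (Real.exp (r / μ^2) + Real.exp (-r / μ^2)) -
      (Real.exp (2 * r / μ^2) - 1) / (Real.exp (2 * r / μ^2) + 1) * r := by
  have h2 : (0:ℝ) < μ^2 := by positivity
  set x := Real.exp (2 * r / μ^2) with hx
  have hxpos : 0 < x := Real.exp_pos _
  -- |α| ≤ 1
  have halpha : |(x - 1) / (x + 1)| ≤ 1 := by
    rw [abs_div, div_le_one (by rw [abs_of_pos (by linarith)]; linarith)]
    rw [abs_of_pos (show (0:ℝ) < x + 1 by linarith)]
    rcases abs_cases (x - 1) with ⟨h, _⟩ | ⟨h, _⟩ <;> linarith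
  have h1 : (x - 1) / (x + 1) * r ≤ |r| := by
    calc (x - 1) / (x + 1) * r ≤ |(x - 1) / (x + 1) * r| := le_abs_self _
      _ = |(x - 1) / (x + 1)| * |r| := abs_mul _ _
      _ ≤ 1 * |r| := by
          exact mul_le_mul_of_nonneg_right halpha (abs_nonneg r)
      _ = |r| := one_mul _
  -- second part
  have hsum : Real.exp (|r| / μ^2) < Real.exp (r / μ^2) + Real.exp (-r / μ^2) := by
    rcases abs_cases r with ⟨h, _⟩ | ⟨h, _⟩
    · rw [h]; have := Real.exp_pos (-r / μ^2); linarith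
    · rw [h, neg_div]
      have := Real.exp_pos (r / μ^2); linarith
  have hlog : |r| / μ^2 < Real.log (Real.exp (r / μ^2) + Real.exp (-r / μ^2)) := by
    have := Real.log_lt_log (Real.exp_pos _) hsum
    rwa [Real.log_exp] at this
  have hs : |r| < μ^2 * Real.log (Real.exp (r / μ^2) + Real.exp (-r / μ^2)) := by
    have := (div_lt_iff₀' h2).mp hlog
    linarith [this]
  exact ⟨h1, hs, by linarith⟩
end

section
/- For any nonzero real μ and positive constant c, the function E₁(x, μ) = s(x, μ) + μ²x²/2 (with s(x, μ) = μ² ln(exp(x/μ²) + exp(-x/μ²))) has ∂E₁/∂μ = (2/μ)(s(x,μ) − α(x,μ)·x) + μ·x², where α(x,μ) = tanh(x/μ²), and this partial derivative is nonzero whenever μ ≠ 0. -/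
/-!
With `t = x / μ²` the energy is `μ² L(t) + μ² x² / 2` for `L(t) = log (eˣ + e⁻ˣ)`, whose derivative is
`L'(t) = tanh t = (e²ᵗ - 1) / (e²ᵗ + 1)`; the chain rule gives the stated formula. Since `|tanh t| < 1`
and `eᵗ + e⁻ᵗ > e^|t|`, we get `t tanh t ≤ |t| < L(t)`, so `s - α x = μ² (L(t) - t tanh t) > 0` and the
derivative `(2 (s - α x) + μ² x²) / μ` has no zero.
-/

open Real

lemma exp_sub_exp_neg_div_exp_add_exp_neg (t : ℝ) :
    (exp t - exp (-t)) / (exp t + exp (-t)) = (exp (2 * t) - 1) / (exp (2 * t) + 1) := by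
  rw [two_mul, exp_add, exp_neg]
  field_simp

lemma hasDerivAt_log_exp_add_exp_neg (t : ℝ) :
    HasDerivAt (fun t => log (exp t + exp (-t))) ((exp (2 * t) - 1) / (exp (2 * t) + 1)) t := by
  have hneg : HasDerivAt (fun t => exp (-t)) (-exp (-t)) t := by
    simpa using (hasDerivAt_neg t).exp
  have hsum : HasDerivAt (fun t => exp t + exp (-t)) (exp t - exp (-t)) t :=
    ((hasDerivAt_exp t).add hneg).congr_deriv (sub_eq_add_neg _ _).symm
  rw [← exp_sub_exp_neg_div_exp_add_exp_neg]
  exact hsum.log (by positivity)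

lemma hasDerivAt_sq_mul_comp_div_sq {L : ℝ → ℝ} {L' x μ : ℝ} (hμ : μ ≠ 0)
    (hL : HasDerivAt L L' (x / μ ^ 2)) :
    HasDerivAt (fun m => m ^ 2 * L (x / m ^ 2)) ((2 / μ) * (μ ^ 2 * L (x / μ ^ 2) - L' * x)) μ := by
  have hsq : HasDerivAt (fun m : ℝ => m ^ 2) (2 * μ) μ := by simpa using hasDerivAt_pow 2 μ
  have hinner : HasDerivAt (fun m => x / m ^ 2) ((0 * μ ^ 2 - x * (2 * μ)) / (μ ^ 2) ^ 2) μ :=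
    (hasDerivAt_const μ x).div hsq (pow_ne_zero 2 hμ)
  refine (hsq.mul (hL.comp μ hinner)).congr_deriv ?_
  simp only [Function.comp_apply]
  field_simp
  ring

lemma abs_exp_sub_one_div_exp_add_one_lt_one (y : ℝ) : |(exp y - 1) / (exp y + 1)| < 1 := by
  rw [abs_div, abs_of_pos (by positivity : 0 < exp y + 1), div_lt_one (by positivity), abs_lt]
  constructor <;> linarith [exp_pos y]

lemma abs_lt_log_exp_add_exp_neg (t : ℝ) : |t| < log (exp t + exp (-t)) := by
  rw [lt_log_iff_exp_lt (by positivity)]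
  rcases abs_choice t with h | h <;> rw [h] <;> linarith [exp_pos t, exp_pos (-t)]

lemma mul_tanh_lt_log_exp_add_exp_neg (t : ℝ) :
    t * ((exp (2 * t) - 1) / (exp (2 * t) + 1)) < log (exp t + exp (-t)) :=
  calc t * ((exp (2 * t) - 1) / (exp (2 * t) + 1))
      ≤ |t| * |(exp (2 * t) - 1) / (exp (2 * t) + 1)| := by rw [← abs_mul]; exact le_abs_self _
    _ ≤ |t| := mul_le_of_le_one_right (abs_nonneg t) (abs_exp_sub_one_div_exp_add_one_lt_one _).le
    _ < log (exp t + exp (-t)) := abs_lt_log_exp_add_exp_neg t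

lemma tanh_mul_lt_sq_mul_log_exp_add_exp_neg {x μ : ℝ} (hμ : μ ≠ 0) :
    (exp (2 * x / μ ^ 2) - 1) / (exp (2 * x / μ ^ 2) + 1) * x
      < μ ^ 2 * log (exp (x / μ ^ 2) + exp (-x / μ ^ 2)) := by
  have hscaled := mul_lt_mul_of_pos_left (mul_tanh_lt_log_exp_add_exp_neg (x / μ ^ 2))
    (by positivity : 0 < μ ^ 2)
  rw [mul_div_assoc, neg_div]
  refine Eq.trans_lt ?_ hscaled
  field_simp

theorem energy_deriv_mu_nonzero (x μ : ℝ) (hμ : μ ≠ 0) :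
    HasDerivAt (fun m : ℝ =>
        m^2 * Real.log (Real.exp (x / m^2) + Real.exp (-x / m^2)) + m^2 * x^2 / 2)
      ((2 / μ) * (μ^2 * Real.log (Real.exp (x / μ^2) + Real.exp (-x / μ^2)) -
        (Real.exp (2 * x / μ^2) - 1) / (Real.exp (2 * x / μ^2) + 1) * x) + μ * x^2) μ ∧
    (2 / μ) * (μ^2 * Real.log (Real.exp (x / μ^2) + Real.exp (-x / μ^2)) -
        (Real.exp (2 * x / μ^2) - 1) / (Real.exp (2 * x / μ^2) + 1) * x) + μ * x^2 ≠ 0 := by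
  constructor
  · have hs := hasDerivAt_sq_mul_comp_div_sq (x := x) hμ
      (hasDerivAt_log_exp_add_exp_neg (x / μ ^ 2))
    have hq : HasDerivAt (fun m : ℝ => m ^ 2 * x ^ 2 / 2) (μ * x ^ 2) μ :=
      (((hasDerivAt_pow 2 μ).mul_const (x ^ 2)).div_const 2).congr_deriv (by ring)
    simp only [neg_div, ← mul_div_assoc] at hs ⊢
    exact hs.add hq
  · have hP := tanh_mul_lt_sq_mul_log_exp_add_exp_neg (x := x) hμ
    rw [show ∀ P : ℝ, 2 / μ * P + μ * x ^ 2 = (2 * P + μ ^ 2 * x ^ 2) / μ by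
      intro P; field_simp]
    exact div_ne_zero (by nlinarith [sq_nonneg (μ * x)]) hμ
end

section
/- For every x ∈ ℝⁿ and nonzero μ, if f(x) = Σᵢ |rᵢ(x)| and E(x, μ) = Σᵢ sᵢ(x, μ) with sᵢ(x, μ) = μ² ln(exp(rᵢ(x)/μ²) + exp(-rᵢ(x)/μ²)), then f(x) ≤ E(x, μ) ≤ f(x) + μ² · m · ln 2, where m is the number of residual functions. -/
lemma log_cosh_bounds (t : ℝ) :
    |t| ≤ Real.log (Real.exp t + Real.exp (-t)) ∧
    Real.log (Real.exp t + Real.exp (-t)) ≤ |t| + Real.log 2 := by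
  have hpos : (0:ℝ) < Real.exp t + Real.exp (-t) :=
    by positivity
  constructor
  · rw [← Real.log_exp |t|]
    apply Real.log_le_log (Real.exp_pos _)
    rcases abs_cases t with ⟨h, _⟩ | ⟨h, _⟩
    · rw [h]; nlinarith [Real.exp_pos (-t)]
    · rw [h]; nlinarith [Real.exp_pos t]
  · have : Real.exp t + Real.exp (-t) ≤ 2 * Real.exp |t| := by
      rcases abs_cases t with ⟨h, _⟩ | ⟨h, ht⟩
      · rw [h]
        have : Real.exp (-t) ≤ Real.exp t := Real.exp_le_exp.mpr (by linarith [abs_nonneg t, h ▸ abs_nonneg t])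
        nlinarith [Real.exp_pos t, Real.exp_le_exp.mpr (neg_le_self (h ▸ abs_nonneg t) : -t ≤ t)]
      · rw [h]
        nlinarith [Real.exp_le_exp.mpr (by linarith : t ≤ -t)]
    calc Real.log (Real.exp t + Real.exp (-t)) ≤ Real.log (2 * Real.exp |t|) :=
          Real.log_le_log hpos this
      _ = |t| + Real.log 2 := by
          rw [Real.log_mul (by norm_num) (Real.exp_ne_zero _), Real.log_exp]; ring

theorem energy_bounds (n m : ℕ) (r : Fin m → (Fin n → ℝ) → ℝ) (x : Fin n → ℝ)
    (μ : ℝ) (hμ : μ ≠ 0) :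
    (∑ i, |r i x|) ≤
      (∑ i, μ^2 * Real.log (Real.exp (r i x / μ^2) + Real.exp (-r i x / μ^2))) ∧
    (∑ i, μ^2 * Real.log (Real.exp (r i x / μ^2) + Real.exp (-r i x / μ^2))) ≤
      (∑ i, |r i x|) + μ^2 * m * Real.log 2 := by
  have hμ2 : (0:ℝ) < μ^2 := by positivity
  have key : ∀ i : Fin m,
      |r i x| ≤ μ^2 * Real.log (Real.exp (r i x / μ^2) + Real.exp (-r i x / μ^2)) ∧
      μ^2 * Real.log (Real.exp (r i x / μ^2) + Real.exp (-r i x / μ^2)) ≤ |r i x| + μ^2 * Real.log 2 := by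
    intro i
    obtain ⟨h1, h2⟩ := log_cosh_bounds (r i x / μ^2)
    have habs : |r i x / μ^2| = |r i x| / μ^2 := by
      rw [abs_div, abs_of_pos hμ2]
    rw [habs] at h1 h2
    have hneg : -r i x / μ^2 = -(r i x / μ^2) := by ring
    rw [hneg]
    constructor
    · have := mul_le_mul_of_nonneg_left h1 hμ2.le
      rw [mul_div_cancel₀ _ hμ2.ne'] at this
      linarith
    · have := mul_le_mul_of_nonneg_left h2 hμ2.le
      rw [mul_add, mul_div_cancel₀ _ hμ2.ne'] at this
      linarith
  constructor
  · exact Finset.sum_le_sum fun i _ => (key i).1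
  · calc (∑ i, μ^2 * Real.log (Real.exp (r i x / μ^2) + Real.exp (-r i x / μ^2)))
        ≤ ∑ i : Fin m, (|r i x| + μ^2 * Real.log 2) :=
          Finset.sum_le_sum fun i _ => (key i).2
      _ = (∑ i, |r i x|) + μ^2 * m * Real.log 2 := by
          rw [Finset.sum_add_distrib, Finset.sum_const, Finset.card_univ, Fintype.card_fin]
          ring
end
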